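/- Let L be the subgroup of B generated by {m₁, m₂, m₃}. The image of L under ψ equals the subgroup M generated by {m₁ + s⁽²⁾₂₃, m₂ + s⁽²⁾₃₁, m₃ + s⁽²⁾₁₂}; M is a different subgroup from L; and the intersection of M with the pure-excitation subgroup {(a,b,s) ∈ B : s = 0} is the trivial subgroup. That is, sweeping the T-domain wall onto the all-smooth boundary produces the magic boundary (m₁s⁽²⁾₂₃, m₂s⁽²⁾₃₁, m₃s⁽²⁾₁₂), on which no electric charge, magnetic flux, or composite thereof can condense. -/

import Mathlib

/-- The group of excitations and codimension-2 domain walls of three copies of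
the 3D toric code: triples (a, b, s) in `(ZMod 2)³ × (ZMod 2)³ × (ZMod 2)³`. -/
abbrev B : Type := (Fin 3 → ZMod 2) × (Fin 3 → ZMod 2) × (Fin 3 → ZMod 2)

/-- The electric charge `eᵢ`. -/
def e (i : Fin 3) : B := (Pi.single i 1, 0, 0)

/-- The magnetic flux `mᵢ`. -/
def m (i : Fin 3) : B := (0, Pi.single i 1, 0)

/-- The S-domain wall `s⁽²⁾ⱼₖ`, labelled by the complementary index `i`
(that is, `s2 i = s⁽²⁾ⱼₖ` for `{i,j,k} = {1,2,3}`). -/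
def s2 (i : Fin 3) : B := (0, 0, Pi.single i 1)

/-- The action of sweeping the T-domain wall `s⁽³⁾₁,₂,₃`:
`(a, b, s) ↦ (a, b, s + b)`, i.e. `mᵢ ↦ mᵢ + s⁽²⁾ⱼₖ`. -/
def ψ (x : B) : B := (x.1, x.2.1, x.2.2 + x.2.1)

def ψhom : B →+ B where
  toFun := ψ
  map_zero' := by simp [ψ]
  map_add' x y := by
    simp only [ψ, Prod.mk_add_mk, Prod.fst_add, Prod.snd_add, Prod.mk.injEq]
    refine ⟨trivial, trivial, ?_⟩
    abel

lemma ψ_m (i : Fin 3) : ψ (m i) = m i + s2 i := by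
  simp [ψ, m, s2, Prod.ext_iff]

/-- first+third components as a hom -/
def φ : B →+ (Fin 3 → ZMod 2) × (Fin 3 → ZMod 2) where
  toFun x := (x.1, x.2.1 + x.2.2)
  map_zero' := by simp
  map_add' x y := by
    simp only [Prod.fst_add, Prod.snd_add, Prod.mk_add_mk, Prod.mk.injEq]
    exact ⟨trivial, by abel⟩

lemma mem_M {x : B} (hx : x ∈ AddSubgroup.closure {m 0 + s2 0, m 1 + s2 1, m 2 + s2 2}) :
    x.1 = 0 ∧ x.2.1 + x.2.2 = 0 := by
  have : φ x = 0 := by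
    refine AddSubgroup.closure_induction (fun y hy => ?_) (map_zero φ)
      (fun a b _ _ ha hb => by rw [map_add, ha, hb, add_zero])
      (fun a _ ha => by rw [map_neg, ha, neg_zero]) hx
    rcases hy with h | h | h <;> subst h <;>
      simp [φ, m, s2, Prod.ext_iff] <;>
      · funext j; simp [Pi.single_apply]; split <;> rfl
  have h1 : x.1 = 0 := congrArg Prod.fst this
  have h2 : x.2.1 + x.2.2 = 0 := congrArg Prod.snd this
  exact ⟨h1, h2⟩

theorem stmt_17 :
    ψ '' ((AddSubgroup.closure {m 0, m 1, m 2} : AddSubgroup B) : Set B) =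
      ((AddSubgroup.closure {m 0 + s2 0, m 1 + s2 1, m 2 + s2 2} : AddSubgroup B) : Set B) ∧
    AddSubgroup.closure {m 0 + s2 0, m 1 + s2 1, m 2 + s2 2} ≠
      AddSubgroup.closure {m 0, m 1, m 2} ∧
    ((AddSubgroup.closure {m 0 + s2 0, m 1 + s2 1, m 2 + s2 2} : AddSubgroup B) : Set B) ∩
      {x : B | x.2.2 = 0} = {0} := by
  refine ⟨?_, ?_, ?_⟩
  · have : ψ '' ((AddSubgroup.closure {m 0, m 1, m 2} : AddSubgroup B) : Set B)
        = ((AddSubgroup.map ψhom (AddSubgroup.closure {m 0, m 1, m 2}) : AddSubgroup B) : Set B) := rfl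
    rw [this, AddMonoidHom.map_closure]
    have hset : (⇑ψhom '' {m 0, m 1, m 2} : Set B) = {m 0 + s2 0, m 1 + s2 1, m 2 + s2 2} := by
      rw [Set.image_insert_eq, Set.image_insert_eq, Set.image_singleton]
      show ({ψ (m 0), ψ (m 1), ψ (m 2)} : Set B) = _
      rw [ψ_m, ψ_m, ψ_m]
    rw [hset]
  · intro h
    have hm : m 0 ∈ AddSubgroup.closure {m 0 + s2 0, m 1 + s2 1, m 2 + s2 2} := by
      rw [h]
      exact AddSubgroup.subset_closure (by left; rfl)
    have := (mem_M hm).2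
    simp [m] at this
  · apply Set.eq_singleton_iff_unique_mem.2
    constructor
    · exact ⟨AddSubgroup.zero_mem _, rfl⟩
    · rintro x ⟨hx, hs⟩
      obtain ⟨h1, h2⟩ := mem_M hx
      have hs' : x.2.2 = 0 := hs
      have h21 : x.2.1 = 0 := by rwa [hs', add_zero] at h2
      have : x = (x.1, x.2.1, x.2.2) := rfl
      rw [this, h1, h21, hs']
      rfl
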